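/- arXiv:2107.08080 — 2 statements merged into one kernel-verified Lean document; each statement's English description precedes it below -/
import Mathlib

section
/- The G-rank of x₁²x₂ over a field k (char k ≠ 2,3) equals 3/2, where r^G_k(f) = inf over g(t) ∈ GL₂(k[[t]]) with val_t(g(t)·f) > 0 of 3·val_t(det g(t))/val_t(g(t)·f). -/
/-- The Gauss `t`-adic valuation of a polynomial with coefficients in `k[[t]]`:
the minimum of the `t`-adic valuations of its coefficients. -/
noncomputable def tval {k : Type*} [Field k] {n : ℕ}
    (F : MvPolynomial (Fin n) (PowerSeries k)) : ℕ :=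
  sInf {m : ℕ | ∃ d, PowerSeries.coeff m (MvPolynomial.coeff d F) ≠ 0}

/-- The `t`-adic valuation of a power series. -/
noncomputable def psval {k : Type*} [Field k] (p : PowerSeries k) : ℕ :=
  sInf {m : ℕ | PowerSeries.coeff m p ≠ 0}

/-- The action of a matrix `g` over `k[[t]]` on polynomials by linear substitution
of the variables. -/
noncomputable def matAct {k : Type*} [Field k] {n : ℕ}
    (g : Matrix (Fin n) (Fin n) (PowerSeries k))
    (F : MvPolynomial (Fin n) (PowerSeries k)) : MvPolynomial (Fin n) (PowerSeries k) :=
  MvPolynomial.aeval (fun i => ∑ j, MvPolynomial.C (g i j) * MvPolynomial.X j) F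

/-- The `G`-rank (`G = GLₙ`) of a (degree `d`) polynomial `F` over `k[[t]]`:
the infimum of `d · val_t(det g) / val_t(g·F)` over matrices `g` over `k[[t]]` with
nonzero determinant such that `val_t(g·F) > 0`. -/
noncomputable def GRank {k : Type*} [Field k] {n : ℕ} (d : ℕ)
    (F : MvPolynomial (Fin n) (PowerSeries k)) : ℝ :=
  sInf {x : ℝ | ∃ g : Matrix (Fin n) (Fin n) (PowerSeries k),
    g.det ≠ 0 ∧ 0 < tval (matAct g F) ∧
    x = (d : ℝ) * (psval g.det : ℝ) / (tval (matAct g F) : ℝ)}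

/-!
Factor each row of `g` as `t ^ aᵢ` times a row that is nonzero modulo `t`. Then
`g · x₁²x₂ = L₁² L₂` is `t ^ (2a₁ + a₂)` times a form whose reduction modulo `t` is a product of
nonzero linear forms over `k`, hence nonzero; so `val_t (g · x₁²x₂) = 2a₁ + a₂`, while
`t ^ (a₁ + a₂)` divides `det g`. Thus `val_t (g · x₁²x₂) ≤ 2 val_t (det g)`, every ratio is at
least `3/2`, and `diag(t, 1)` attains it.
-/

open MvPolynomial

section PowerSeries

variable {k : Type*} [Field k]

lemma le_psval_of_X_pow_dvd {p : PowerSeries k} {n : ℕ} (hp : p ≠ 0)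
    (h : PowerSeries.X ^ n ∣ p) : n ≤ psval p := by
  rw [PowerSeries.X_pow_dvd_iff] at h
  exact le_csInf (PowerSeries.exists_coeff_ne_zero_iff_ne_zero.mpr hp)
    fun m hm => not_lt.mp fun hlt => hm (h m hlt)

lemma psval_X : psval (PowerSeries.X : PowerSeries k) = 1 :=
  le_antisymm (Nat.sInf_le (by simp)) (le_psval_of_X_pow_dvd PowerSeries.X_ne_zero (by simp))

lemma exists_eq_X_pow_mul_of_ne_zero {ι : Type*} [Fintype ι] {v : ι → PowerSeries k}
    (hv : v ≠ 0) : ∃ (a : ℕ) (w : ι → PowerSeries k),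
      (∀ j, v j = PowerSeries.X ^ a * w j) ∧ ∃ j, PowerSeries.constantCoeff (w j) ≠ 0 := by
  obtain ⟨j, hj⟩ := Function.ne_iff.mp hv
  obtain ⟨j₀, -, hj₀⟩ := Finset.univ.exists_min_image (fun j => PowerSeries.order (v j))
    ⟨j, Finset.mem_univ j⟩
  have hv₀ : v j₀ ≠ 0 := fun h => hj <| PowerSeries.order_eq_top.mp <|
    top_le_iff.mp <| (PowerSeries.order_eq_top.mpr h).symm.trans_le (hj₀ j (Finset.mem_univ j))
  set a := (PowerSeries.order (v j₀)).toNat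
  have ha : (a : ℕ∞) = PowerSeries.order (v j₀) :=
    ENat.natCast_toNat (PowerSeries.order_eq_top.not.mpr hv₀)
  have hdvd : ∀ j, PowerSeries.X ^ a ∣ v j := fun j =>
    PowerSeries.X_pow_dvd_iff.mpr fun m hm => PowerSeries.coeff_of_lt_order _ <|
      (ha ▸ Nat.cast_lt.mpr hm).trans_le (hj₀ j (Finset.mem_univ j))
  choose w hw using hdvd
  refine ⟨a, w, hw, j₀, ?_⟩
  have : w j₀ = PowerSeries.divXPowOrder (v j₀) :=
    mul_left_cancel₀ (pow_ne_zero a PowerSeries.X_ne_zero)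
      ((hw j₀).symm.trans PowerSeries.X_pow_order_mul_divXPowOrder.symm)
  rw [this]
  exact PowerSeries.constantCoeff_divXPowOrder_eq_zero_iff.not.mpr hv₀

end PowerSeries

section LinearForm

variable {R S σ : Type*} [CommSemiring R] [CommSemiring S] [Fintype σ]

noncomputable def linearForm (v : σ → R) : MvPolynomial σ R := ∑ j, C (v j) * X j

lemma linearForm_const_mul (c : R) (v : σ → R) :
    linearForm (fun j => c * v j) = C c * linearForm v := by
  simp only [linearForm, Finset.mul_sum, map_mul, mul_assoc]

lemma map_linearForm (f : R →+* S) (v : σ → R) :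
    map f (linearForm v) = linearForm (f ∘ v) := by
  simp [linearForm]

lemma coeff_single_linearForm [DecidableEq σ] (v : σ → R) (j : σ) :
    coeff (Finsupp.single j 1) (linearForm v) = v j := by
  simp [linearForm, coeff_sum, coeff_C_mul, coeff_X, Finsupp.single_left_inj]

lemma linearForm_ne_zero {v : σ → R} (hv : v ≠ 0) : linearForm v ≠ 0 := by
  classical
  obtain ⟨j, hj⟩ := Function.ne_iff.mp hv
  exact ne_zero_iff.mpr ⟨_, (coeff_single_linearForm v j).trans_ne hj⟩

end LinearForm

section Valuation

variable {k : Type*} [Field k]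

lemma matAct_eq_aeval_linearForm {n : ℕ} (g : Matrix (Fin n) (Fin n) (PowerSeries k))
    (F : MvPolynomial (Fin n) (PowerSeries k)) :
    matAct g F = aeval (fun i => linearForm (g i)) F :=
  rfl

lemma matAct_X_sq_mul_X (g : Matrix (Fin 2) (Fin 2) (PowerSeries k)) :
    matAct g (X 0 ^ 2 * X 1) = linearForm (g 0) ^ 2 * linearForm (g 1) := by
  simp [matAct_eq_aeval_linearForm]

lemma tval_C_X_pow_mul {n : ℕ} (m : ℕ) {P : MvPolynomial (Fin n) (PowerSeries k)}
    (hP : map PowerSeries.constantCoeff P ≠ 0) :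
    tval (C (PowerSeries.X ^ m) * P) = m := by
  have hcoeff : ∀ d i, PowerSeries.coeff i (coeff d (C (PowerSeries.X ^ m) * P)) =
      if m ≤ i then PowerSeries.coeff (i - m) (coeff d P) else 0 := fun d i => by
    rw [coeff_C_mul, PowerSeries.coeff_X_pow_mul']
  obtain ⟨d, hd⟩ := exists_coeff_ne_zero hP
  have hm : PowerSeries.coeff m (coeff d (C (PowerSeries.X ^ m) * P)) ≠ 0 := by
    rw [hcoeff, if_pos le_rfl, Nat.sub_self, PowerSeries.coeff_zero_eq_constantCoeff]
    rwa [coeff_map] at hd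
  refine le_antisymm (Nat.sInf_le ⟨d, hm⟩) (le_csInf ⟨m, d, hm⟩ ?_)
  rintro i ⟨d', hd'⟩
  by_contra! hi
  rw [hcoeff, if_neg (not_le.mpr hi)] at hd'
  exact hd' rfl

theorem tval_matAct_X_sq_mul_X_le (g : Matrix (Fin 2) (Fin 2) (PowerSeries k))
    (hg : g.det ≠ 0) : tval (matAct g (X 0 ^ 2 * X 1)) ≤ 2 * psval g.det := by
  have hrow : ∀ i, g i ≠ 0 := fun i hi =>
    hg (Matrix.det_eq_zero_of_row_eq_zero i fun j => congrFun hi j)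
  choose a h hgh hh using fun i => exists_eq_X_pow_mul_of_ne_zero (hrow i)
  have hform : ∀ i, linearForm (g i) = C (PowerSeries.X ^ a i) * linearForm (h i) := fun i => by
    rw [← linearForm_const_mul]
    exact congrArg linearForm (funext (hgh i))
  have hred : ∀ i, map PowerSeries.constantCoeff (linearForm (h i)) ≠ 0 := fun i => by
    rw [map_linearForm]
    exact linearForm_ne_zero (Function.ne_iff.mpr (hh i))
  have hval : tval (matAct g (X 0 ^ 2 * X 1)) = 2 * a 0 + a 1 := by
    rw [matAct_X_sq_mul_X, hform, hform]
    rw [show ∀ u v : MvPolynomial (Fin 2) (PowerSeries k),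
      (C (PowerSeries.X ^ a 0) * u) ^ 2 * (C (PowerSeries.X ^ a 1) * v) =
        C (PowerSeries.X ^ (2 * a 0 + a 1)) * (u ^ 2 * v) from fun u v => by
      simp only [pow_add, pow_mul', map_mul, map_pow]; ring]
    refine tval_C_X_pow_mul _ ?_
    rw [map_mul, map_pow]
    exact mul_ne_zero (pow_ne_zero 2 (hred 0)) (hred 1)
  have hdet : a 0 + a 1 ≤ psval g.det := by
    refine le_psval_of_X_pow_dvd hg ⟨h 0 0 * h 1 1 - h 0 1 * h 1 0, ?_⟩
    rw [Matrix.det_fin_two, hgh 0 0, hgh 0 1, hgh 1 0, hgh 1 1]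
    ring
  omega

lemma tval_matAct_diag_X_one :
    tval (matAct !![PowerSeries.X, 0; 0, 1]
      (X 0 ^ 2 * X 1 : MvPolynomial (Fin 2) (PowerSeries k))) = 2 := by
  have hform : matAct !![PowerSeries.X, 0; 0, 1]
      (X 0 ^ 2 * X 1 : MvPolynomial (Fin 2) (PowerSeries k)) =
        C (PowerSeries.X ^ 2) * (X 0 ^ 2 * X 1) := by
    simp only [matAct_X_sq_mul_X, linearForm, Fin.sum_univ_two, Matrix.of_apply,
      Matrix.cons_val', Matrix.cons_val_fin_one, Matrix.cons_val_zero, Matrix.cons_val_one,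
      C_0, C_1, C_pow, zero_mul, one_mul, add_zero, zero_add]
    ring
  rw [hform]
  refine tval_C_X_pow_mul 2 ?_
  simp only [map_mul, map_pow, map_X]
  exact mul_ne_zero (pow_ne_zero 2 (X_ne_zero 0)) (X_ne_zero 1)

end Valuation

theorem stmt13_general {k : Type*} [Field k] :
    GRank 3 (MvPolynomial.map (PowerSeries.C (R := k))
      (MvPolynomial.X 0 ^ 2 * MvPolynomial.X 1 : MvPolynomial (Fin 2) k)) = 3 / 2 := by
  simp only [GRank, map_mul, map_pow, map_X]
  refine IsLeast.csInf_eq ⟨⟨!![PowerSeries.X, 0; 0, 1], ?_, ?_, ?_⟩, ?_⟩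
  · simp [Matrix.det_fin_two_of, PowerSeries.X_ne_zero]
  · rw [tval_matAct_diag_X_one]; norm_num
  · rw [tval_matAct_diag_X_one, Matrix.det_fin_two_of, mul_one, mul_zero, sub_zero, psval_X]
    norm_num
  · rintro x ⟨g, hg, hpos, rfl⟩
    have hle : (tval (matAct g (X 0 ^ 2 * X 1)) : ℝ) ≤ 2 * psval g.det := by
      exact_mod_cast tval_matAct_X_sq_mul_X_le g hg
    rw [le_div_iff₀ (by exact_mod_cast hpos)]
    linarith

/-- over a field `k` with `char k ≠ 2, 3`, the `G`-rank of the binary cubic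
`x₁²x₂` equals `3/2`. -/
theorem stmt13 {k : Type*} [Field k] (h2 : (2 : k) ≠ 0) (h3 : (3 : k) ≠ 0) :
    GRank 3 (MvPolynomial.map (PowerSeries.C (R := k))
      (MvPolynomial.X 0 ^ 2 * MvPolynomial.X 1 : MvPolynomial (Fin 2) k)) = 3 / 2 :=
  stmt13_general
end

section
/- Let f be a homogeneous polynomial of degree d ≥ 2 over a field k with slice rank r over k, i.e., f = l₁f₁ + ... + l_r f_r with lᵢ linear. Then for g(t) = diag(t,...,t,1,...,1) (r copies of t) with respect to a basis whose first r dual vectors are l₁,...,l_r, one has val_t(g(t)·f) ≥ 1 and val_t(det g(t)) = r, hence r^G_k(f) ≤ d·r. -/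
open MvPolynomial

theorem MvPolynomial.coeff_aeval_C_mul_X {R σ : Type*} [CommSemiring R] (c : σ → R)
    (F : MvPolynomial σ R) (m : σ →₀ ℕ) :
    coeff m (aeval (fun i => C (c i) * X i) F) = (m.prod fun i e => c i ^ e) * coeff m F := by
  induction F using MvPolynomial.induction_on' with
  | monomial u a =>
    classical
    have hu : (u.prod fun i e => (C (c i) * X i : MvPolynomial σ R) ^ e)
        = monomial u (u.prod fun i e => c i ^ e) := by
      simp only [mul_pow, Finsupp.prod_mul, ← map_pow, ← map_finsuppProd, monomial_eq]
    rw [aeval_monomial, hu, algebraMap_eq, C_mul_monomial, coeff_monomial, coeff_monomial]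
    split_ifs with h
    · rw [h, mul_comm]
    · rw [mul_zero]
  | add p q hp hq => rw [map_add, coeff_add, coeff_add, hp, hq, mul_add]

theorem MvPolynomial.sum_mul_pos_of_mem_span_X_image {R σ : Type*} [CommSemiring R] [Fintype σ]
    {s : Set σ} {w : σ → ℕ} (hw : ∀ i ∈ s, 0 < w i) {f : MvPolynomial σ R}
    (hf : f ∈ Ideal.span (X '' s)) {u : σ →₀ ℕ} (hu : u ∈ f.support) :
    0 < ∑ i, w i * u i := by
  obtain ⟨i, hi, hui⟩ := mem_ideal_span_X_image.mp hf u hu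
  exact Finset.sum_pos' (fun _ _ => Nat.zero_le _)
    ⟨i, Finset.mem_univ i, Nat.mul_pos (hw i hi) (Nat.pos_of_ne_zero hui)⟩

theorem Fin.sum_ite_val_lt {n r : ℕ} (hr : r ≤ n) :
    ∑ i : Fin n, (if (i : ℕ) < r then 1 else 0) = r := by
  rw [Finset.sum_boole, Fin.card_filter_val_lt, min_eq_right hr, Nat.cast_id]

section

variable {k : Type*} [Field k] {n : ℕ}

theorem psval_X_pow (m : ℕ) : psval ((PowerSeries.X : PowerSeries k) ^ m) = m := by
  have h : {j : ℕ | PowerSeries.coeff j ((PowerSeries.X : PowerSeries k) ^ m) ≠ 0} = {m} := by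
    ext j
    simp [PowerSeries.coeff_X_pow]
  rw [psval, h, csInf_singleton]

theorem le_tval_of_forall_X_pow_dvd {F : MvPolynomial (Fin n) (PowerSeries k)} {m : ℕ}
    (hF : F ≠ 0) (hdvd : ∀ u, PowerSeries.X ^ m ∣ coeff u F) : m ≤ tval F := by
  obtain ⟨u, hu⟩ := ne_zero_iff.mp hF
  obtain ⟨j, hj⟩ : ∃ j, PowerSeries.coeff j (coeff u F) ≠ 0 := by
    by_contra! h
    exact hu (PowerSeries.ext h)
  refine le_csInf ⟨j, u, hj⟩ ?_
  rintro j' ⟨u', hj'⟩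
  by_contra! hlt
  exact hj' (PowerSeries.X_pow_dvd_iff.mp (hdvd u') j' hlt)

theorem GRank_le {d : ℕ} {F : MvPolynomial (Fin n) (PowerSeries k)}
    {g : Matrix (Fin n) (Fin n) (PowerSeries k)} (hdet : g.det ≠ 0)
    (hpos : 0 < tval (matAct g F)) :
    GRank d F ≤ d * psval g.det / tval (matAct g F) := by
  refine csInf_le ⟨0, ?_⟩ ⟨g, hdet, hpos, rfl⟩
  rintro x ⟨g', -, -, rfl⟩
  exact div_nonneg (mul_nonneg (Nat.cast_nonneg _) (Nat.cast_nonneg _)) (Nat.cast_nonneg _)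

theorem matAct_diagonal (c : Fin n → PowerSeries k) (F : MvPolynomial (Fin n) (PowerSeries k)) :
    matAct (Matrix.diagonal c) F = aeval (fun i => C (c i) * X i) F := by
  simp only [matAct, Matrix.diagonal_apply, apply_ite C, map_zero, ite_mul, zero_mul,
    Finset.sum_ite_eq, Finset.mem_univ, if_true]

theorem coeff_matAct_diagonal_X_pow (w : Fin n → ℕ) (f : MvPolynomial (Fin n) k)
    (u : Fin n →₀ ℕ) :
    coeff u (matAct (Matrix.diagonal fun i => PowerSeries.X ^ w i) (map PowerSeries.C f))
      = PowerSeries.X ^ (∑ i, w i * u i) * PowerSeries.C (coeff u f) := by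
  rw [matAct_diagonal, coeff_aeval_C_mul_X, coeff_map, Finsupp.prod_fintype _ _ (by simp)]
  simp only [← pow_mul, Finset.prod_pow_eq_pow_sum]

theorem det_diagonal_X_pow (w : Fin n → ℕ) :
    (Matrix.diagonal fun i => (PowerSeries.X : PowerSeries k) ^ w i).det
      = PowerSeries.X ^ ∑ i, w i := by
  rw [Matrix.det_diagonal, Finset.prod_pow_eq_pow_sum]

theorem le_tval_matAct_diagonal_X_pow {w : Fin n → ℕ} {f : MvPolynomial (Fin n) k} {m : ℕ}
    (hf : f ≠ 0) (hw : ∀ u ∈ f.support, m ≤ ∑ i, w i * u i) :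
    m ≤ tval (matAct (Matrix.diagonal fun i => PowerSeries.X ^ w i) (map PowerSeries.C f)) := by
  obtain ⟨u₀, hu₀⟩ := ne_zero_iff.mp hf
  refine le_tval_of_forall_X_pow_dvd (ne_zero_iff.mpr ⟨u₀, ?_⟩) fun u => ?_
  · rw [coeff_matAct_diagonal_X_pow]
    exact mul_ne_zero (pow_ne_zero _ PowerSeries.X_ne_zero)
      ((map_ne_zero_iff _ PowerSeries.C_injective).mpr hu₀)
  · rw [coeff_matAct_diagonal_X_pow]
    by_cases hu : coeff u f = 0
    · rw [hu, map_zero, mul_zero]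
      exact dvd_zero _
    · exact (pow_dvd_pow _ (hw u (mem_support_iff.mpr hu))).mul_right _

end

theorem stmt14_general {k : Type*} [Field k] {n d r : ℕ} (hr : r ≤ n)
    (f : MvPolynomial (Fin n) k) (hf : f ≠ 0)
    (hslice : f ∈ Ideal.span {p : MvPolynomial (Fin n) k | ∃ i : Fin n, (i : ℕ) < r ∧ p = MvPolynomial.X i}) :
    1 ≤ tval (matAct
        (Matrix.diagonal fun i : Fin n => if (i : ℕ) < r then (PowerSeries.X : PowerSeries k) else 1)
        (MvPolynomial.map PowerSeries.C f)) ∧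
    psval (Matrix.diagonal fun i : Fin n =>
        if (i : ℕ) < r then (PowerSeries.X : PowerSeries k) else 1).det = r ∧
    GRank d (MvPolynomial.map PowerSeries.C f) ≤ (d : ℝ) * r := by
  set w : Fin n → ℕ := fun i => if (i : ℕ) < r then 1 else 0
  have hg : (fun i : Fin n => if (i : ℕ) < r then (PowerSeries.X : PowerSeries k) else 1)
      = fun i => PowerSeries.X ^ w i := by
    funext i
    by_cases hi : (i : ℕ) < r <;> simp [w, hi]
  have hspan : f ∈ Ideal.span (X '' {i : Fin n | (i : ℕ) < r}) := by
    convert hslice using 2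
    ext p
    simp [eq_comm]
  have hval : 1 ≤ tval (matAct (Matrix.diagonal fun i => PowerSeries.X ^ w i)
      (map PowerSeries.C f)) :=
    le_tval_matAct_diagonal_X_pow hf fun u hu =>
      sum_mul_pos_of_mem_span_X_image
        (fun (i : Fin n) (hi : (i : ℕ) < r) => by simp [w, hi]) hspan hu
  have hdet : psval (Matrix.diagonal fun i => (PowerSeries.X : PowerSeries k) ^ w i).det = r := by
    rw [det_diagonal_X_pow, psval_X_pow, Fin.sum_ite_val_lt hr]
  rw [hg]
  refine ⟨hval, hdet, (GRank_le ?_ hval).trans ?_⟩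
  · rw [det_diagonal_X_pow]
    exact pow_ne_zero _ PowerSeries.X_ne_zero
  · rw [hdet]
    exact div_le_self (by positivity) (by exact_mod_cast hval)

/-- if `f` is a nonzero homogeneous polynomial of degree `d ≥ 2` of slice rank
at most `r` in normalized coordinates (i.e. `f` lies in the ideal generated by the first `r`
variables), then for `g(t) = diag(t,...,t,1,...,1)` (with `r` copies of `t`) one has
`val_t(g(t)·f) ≥ 1` and `val_t(det g(t)) = r`; hence `r^G_k(f) ≤ d·r`. -/
theorem stmt14 {k : Type*} [Field k] {n d r : ℕ} (hd : 2 ≤ d) (hr : r ≤ n)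
    (f : MvPolynomial (Fin n) k) (hf : f ≠ 0) (hdeg : f.IsHomogeneous d)
    (hslice : f ∈ Ideal.span {p : MvPolynomial (Fin n) k | ∃ i : Fin n, (i : ℕ) < r ∧ p = MvPolynomial.X i}) :
    1 ≤ tval (matAct
        (Matrix.diagonal fun i : Fin n => if (i : ℕ) < r then (PowerSeries.X : PowerSeries k) else 1)
        (MvPolynomial.map PowerSeries.C f)) ∧
    psval (Matrix.diagonal fun i : Fin n =>
        if (i : ℕ) < r then (PowerSeries.X : PowerSeries k) else 1).det = r ∧
    GRank d (MvPolynomial.map PowerSeries.C f) ≤ (d : ℝ) * r :=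
  stmt14_general hr f hf hslice
end
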